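/- For all vectors β and u in ℝ⁷, the seven-dimensional cross product satisfies β × (β × u) = −‖β‖² u + ⟨β, u⟩ β. -/

import Mathlib

open scoped RealInnerProductSpace

noncomputable section

/-- `V7` is ℝ⁷ with its Euclidean inner product. -/
abbrev V7 : Type := EuclideanSpace ℝ (Fin 7)

/-- Evaluation of the wedge product `eⁱ ∧ eʲ ∧ eᵏ` of dual basis 1-forms on three vectors. -/
def w3 (i j k : Fin 7) (u v w : V7) : ℝ :=
  Matrix.det !![u i, u j, u k; v i, v j, v k; w i, w j, w k]

/-- Evaluation of the wedge product `eⁱ ∧ eʲ ∧ eᵏ ∧ eˡ` on four vectors. -/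
def w4 (i j k l : Fin 7) (u v w z : V7) : ℝ :=
  Matrix.det !![u i, u j, u k, u l; v i, v j, v k, v l;
                w i, w j, w k, w l; z i, z j, z k, z l]

/-- The standard G₂ 3-form φ₀ = e¹²³+e¹⁴⁵+e¹⁶⁷+e²⁴⁶−e²⁵⁷−e³⁴⁷−e³⁵⁶ (0-indexed). -/
def phi0 (u v w : V7) : ℝ :=
  w3 0 1 2 u v w + w3 0 3 4 u v w + w3 0 5 6 u v w + w3 1 3 5 u v w
    - w3 1 4 6 u v w - w3 2 3 6 u v w - w3 2 4 5 u v w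

/-- The 4-form ψ₀ = ∗φ₀ = e⁴⁵⁶⁷+e²³⁶⁷+e²³⁴⁵+e¹³⁵⁷−e¹³⁴⁶−e¹²⁵⁶−e¹²⁴⁷ (0-indexed). -/
def psi0 (u v w z : V7) : ℝ :=
  w4 3 4 5 6 u v w z + w4 1 2 5 6 u v w z + w4 1 2 3 4 u v w z + w4 0 2 4 6 u v w z
    - w4 0 2 3 5 u v w z - w4 0 1 4 5 u v w z - w4 0 1 3 6 u v w z

-- The `i`-th coordinate is `φ₀(u, v, eᵢ)`.
def cross7 (u v : V7) : V7 :=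
  !₂[(u 1 * v 2 - u 2 * v 1) + (u 3 * v 4 - u 4 * v 3) + (u 5 * v 6 - u 6 * v 5),
    -(u 0 * v 2 - u 2 * v 0) + (u 3 * v 5 - u 5 * v 3) - (u 4 * v 6 - u 6 * v 4),
    (u 0 * v 1 - u 1 * v 0) - (u 3 * v 6 - u 6 * v 3) - (u 4 * v 5 - u 5 * v 4),
    -(u 0 * v 4 - u 4 * v 0) - (u 1 * v 5 - u 5 * v 1) + (u 2 * v 6 - u 6 * v 2),
    (u 0 * v 3 - u 3 * v 0) + (u 1 * v 6 - u 6 * v 1) + (u 2 * v 5 - u 5 * v 2),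
    -(u 0 * v 6 - u 6 * v 0) + (u 1 * v 3 - u 3 * v 1) - (u 2 * v 4 - u 4 * v 2),
    (u 0 * v 5 - u 5 * v 0) - (u 1 * v 4 - u 4 * v 1) - (u 2 * v 3 - u 3 * v 2)]

theorem inner_cross7 (u v w : V7) : ⟪cross7 u v, w⟫ = phi0 u v w := by
  simp only [cross7, phi0, w3, Matrix.det_fin_three, Matrix.of_apply, Matrix.cons_val',
    Matrix.cons_val_fin_one, Matrix.cons_val, Matrix.cons_val_zero, Matrix.cons_val_one,
    PiLp.inner_apply, RCLike.inner_apply, Real.ringHom_apply, Fin.sum_univ_seven]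
  ring

theorem eq_cross7_of_inner_eq_phi0 {cross : V7 → V7 → V7}
    (hcross : ∀ u v w : V7, ⟪cross u v, w⟫ = phi0 u v w) (u v : V7) :
    cross u v = cross7 u v :=
  ext_inner_right ℝ fun w => by rw [hcross, inner_cross7]

theorem cross7_cross7_self (β u : V7) :
    cross7 β (cross7 β u) = (-(‖β‖ ^ 2) : ℝ) • u + (⟪β, u⟫ : ℝ) • β := by
  ext i
  fin_cases i <;>
    simp only [cross7, Fin.zero_eta, Fin.mk_one, Fin.reduceFinMk, Matrix.cons_val,
      Matrix.cons_val_zero, Matrix.cons_val_one, EuclideanSpace.real_norm_sq_eq,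
      Fin.sum_univ_seven, PiLp.inner_apply, RCLike.inner_apply, Real.ringHom_apply,
      PiLp.add_apply, PiLp.smul_apply, smul_eq_mul] <;>
    ring

theorem cross_cross_eq (cross : V7 → V7 → V7)
    (hcross : ∀ u v w : V7, ⟪cross u v, w⟫ = phi0 u v w)
    (β u : V7) :
    cross β (cross β u) = (-(‖β‖ ^ 2) : ℝ) • u + (⟪β, u⟫ : ℝ) • β := by
  simp only [eq_cross7_of_inner_eq_phi0 hcross, cross7_cross7_self]
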